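/- Define g₂ : (0,∞) → ℝ piecewise by g₂(x) = x − 3 for x ≤ 6, g₂(x) = x²/12 for 6 < x ≤ 10, g₂(x) = (5/3)x − 25/3 for 10 < x ≤ 14, and g₂(x) = 3x − 27 for x > 14. Then the supremum of g₂(x)/x² over (0,∞) equals 1/12 and is attained exactly on the set [6,10] ∪ {18}. -/
import Mathlib


open Set

noncomputable def g₂ : ℝ → ℝ := fun x =>
  if x ≤ 6 then x - 3
  else if x ≤ 10 then x ^ 2 / 12
  else if x ≤ 14 then (5 / 3) * x - 25 / 3
  else 3 * x - 27

theorem example2_maximizers :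
    (∀ x ∈ Set.Ioi (0 : ℝ), g₂ x / x ^ 2 ≤ 1 / 12)
      ∧ {x ∈ Set.Ioi (0 : ℝ) | g₂ x / x ^ 2 = 1 / 12}
          = Set.Icc (6 : ℝ) 10 ∪ {18} := by
  have key : ∀ x : ℝ, 0 < x → (12 * g₂ x ≤ x ^ 2 ∧ (12 * g₂ x = x ^ 2 ↔ (6 ≤ x ∧ x ≤ 10) ∨ x = 18)) := by
    intro x hx
    unfold g₂
    split_ifs with h1 h2 h3
    · constructor
      · nlinarith [sq_nonneg (x - 6)]
      · constructor
        · intro h; left; constructor <;> nlinarith [sq_nonneg (x - 6)]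
        · rintro (⟨h6, _⟩ | h18) <;> nlinarith
    · push_neg at h1
      constructor
      · nlinarith
      · constructor
        · intro _; left; exact ⟨le_of_lt h1, h2⟩
        · intro _; ring
    · push_neg at h1 h2
      constructor
      · nlinarith [sq_nonneg (x - 10)]
      · constructor
        · intro h; exfalso; nlinarith [sq_nonneg (x - 10)]
        · rintro (⟨_, h10⟩ | h18) <;> nlinarith
    · push_neg at h1 h2 h3
      constructor
      · nlinarith [sq_nonneg (x - 18)]
      · constructor
        · intro h; right; nlinarith [sq_nonneg (x - 18)]
        · rintro (⟨_, h10⟩ | h18) <;> nlinarith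
  constructor
  · intro x hx
    have hx' : (0:ℝ) < x := hx
    rw [div_le_div_iff₀ (by positivity) (by norm_num)]
    linarith [(key x hx').1]
  · ext x
    simp only [mem_setOf_eq, mem_Ioi, mem_union, mem_Icc, mem_singleton_iff]
    constructor
    · rintro ⟨hx, heq⟩
      rw [div_eq_div_iff (by positivity) (by norm_num)] at heq
      exact (key x hx).2.mp (by linarith)
    · rintro h
      have hx : 0 < x := by rcases h with ⟨h6, _⟩ | h18 <;> linarith
      refine ⟨hx, ?_⟩
      rw [div_eq_div_iff (by positivity) (by norm_num)]
      linarith [(key x hx).2.mpr h]
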